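/- Let (X, S, X̂) be as in the Gaussian RDC setting: jointly Gaussian, Cov(X,S) = θ₁, Cov(X,X̂) = θ₂, S − X − X̂ Markov, and C ≥ (1/2)log(1−ρ²)+h(S) with ρ = θ₁/(σₛσₓ). The classification constraint H(S|X̂) ≤ C is equivalent to θ₂²/σ_x̂² ≥ (σₛ²σₓ⁴/θ₁²)(1 − e^{−2h(S)+2C}). Since I(X;X̂) = −(1/2)log(1 − θ₂²/(σₓ²σ_x̂²)) is increasing in θ₂²/σ_x̂², it follows that I(X;X̂) ≥ −(1/2)log(1 − (1/ρ²)(1 − e^{−2h(S)+2C})). -/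
import Mathlib


/-- Differential entropy (nats) of a Gaussian with variance `v`. -/
noncomputable def gEnt (v : ℝ) : ℝ := (1 / 2) * Real.log (2 * Real.pi * Real.exp 1 * v)

/-- Mutual information (nats) between jointly Gaussian variables with variances
`vx`, `vy` and covariance `c`. -/
noncomputable def gMI (vx vy c : ℝ) : ℝ := -((1 / 2) * Real.log (1 - c ^ 2 / (vx * vy)))

/-- in the Gaussian RDC setting, the classification constraint
`H(S|X̂) ≤ C` (with `H(S|X̂) = h(S) - I(S;X̂)` and `Cov(S,X̂) = θ₁θ₂/σₓ²`) is
equivalent to `θ₂²/σ_x̂² ≥ (σₛ²σₓ⁴/θ₁²)(1 - e^{-2h(S)+2C})`, and since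
`I(X;X̂) = -(1/2)log(1 - θ₂²/(σₓ²σ_x̂²))` is increasing in `θ₂²/σ_x̂²`, it implies
`I(X;X̂) ≥ -(1/2)log(1 - (1/ρ²)(1 - e^{-2h(S)+2C}))`. -/
theorem stmt16 (μx μs σx σs θ₁ θ₂ vxh C : ℝ)
    (hσx : 0 < σx) (hσs : 0 < σs) (hvxh : 0 < vxh) (hθ : θ₁ ≠ 0)
    (hρ : θ₁ ^ 2 < σs ^ 2 * σx ^ 2)
    (hvalid : θ₂ ^ 2 < σx ^ 2 * vxh)
    (hC : (1 / 2) * Real.log (1 - (θ₁ / (σs * σx)) ^ 2) + gEnt (σs ^ 2) ≤ C) :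
    ((gEnt (σs ^ 2) - gMI (σs ^ 2) vxh (θ₁ * θ₂ / σx ^ 2) ≤ C)
        ↔ σs ^ 2 * σx ^ 4 / θ₁ ^ 2 * (1 - Real.exp (-2 * gEnt (σs ^ 2) + 2 * C))
            ≤ θ₂ ^ 2 / vxh) ∧
    (gEnt (σs ^ 2) - gMI (σs ^ 2) vxh (θ₁ * θ₂ / σx ^ 2) ≤ C →
      -((1 / 2) * Real.log (1 - (1 / (θ₁ / (σs * σx)) ^ 2)
          * (1 - Real.exp (-2 * gEnt (σs ^ 2) + 2 * C))))
        ≤ gMI (σx ^ 2) vxh θ₂) := by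
  have hx2 : (0:ℝ) < σx ^ 2 := by positivity
  have hs2 : (0:ℝ) < σs ^ 2 := by positivity
  have hθ2 : (0:ℝ) < θ₁ ^ 2 := by positivity
  set h := gEnt (σs ^ 2) with hh
  set E := Real.exp (-2 * h + 2 * C) with hE
  have hEpos : 0 < E := Real.exp_pos _
  -- rewrite the inner argument
  have hA : (θ₁ * θ₂ / σx ^ 2) ^ 2 / (σs ^ 2 * vxh)
      = θ₁ ^ 2 / (σs ^ 2 * σx ^ 4) * (θ₂ ^ 2 / vxh) := by
    field_simp
  have hu_lt : θ₁ ^ 2 / (σs ^ 2 * σx ^ 4) * (θ₂ ^ 2 / vxh) < 1 := by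
    rw [div_mul_div_comm, div_lt_one (by positivity)]
    nlinarith [sq_nonneg θ₁, sq_nonneg θ₂, mul_pos hs2 hx2]
  have hApos : 0 < 1 - θ₁ ^ 2 / (σs ^ 2 * σx ^ 4) * (θ₂ ^ 2 / vxh) := by linarith
  have hk : (0:ℝ) < θ₁ ^ 2 / (σs ^ 2 * σx ^ 4) := by positivity
  have key : (h - gMI (σs ^ 2) vxh (θ₁ * θ₂ / σx ^ 2) ≤ C)
      ↔ σs ^ 2 * σx ^ 4 / θ₁ ^ 2 * (1 - E) ≤ θ₂ ^ 2 / vxh := by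
    unfold gMI
    rw [hA]
    rw [show (h - -(1 / 2 * Real.log (1 - θ₁ ^ 2 / (σs ^ 2 * σx ^ 4) * (θ₂ ^ 2 / vxh))) ≤ C)
        ↔ Real.log (1 - θ₁ ^ 2 / (σs ^ 2 * σx ^ 4) * (θ₂ ^ 2 / vxh)) ≤ -2 * h + 2 * C from
      ⟨fun hx => by linarith, fun hx => by linarith⟩]
    rw [Real.log_le_iff_le_exp hApos, ← hE]
    rw [show σs ^ 2 * σx ^ 4 / θ₁ ^ 2 = (θ₁ ^ 2 / (σs ^ 2 * σx ^ 4))⁻¹ by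
      rw [inv_div]]
    rw [inv_mul_le_iff₀ hk]
    constructor <;> intro hx <;> nlinarith
  refine ⟨key, fun hcon => ?_⟩
  have ht := key.mp hcon
  -- second part
  unfold gMI
  have hρ2 : 1 / (θ₁ / (σs * σx)) ^ 2 = σs ^ 2 * σx ^ 2 / θ₁ ^ 2 := by
    field_simp
  have hBpos : 0 < 1 - θ₂ ^ 2 / (σx ^ 2 * vxh) := by
    rw [sub_pos, div_lt_one (by positivity)]; exact hvalid
  have hmono : σs ^ 2 * σx ^ 2 / θ₁ ^ 2 * (1 - E) ≤ θ₂ ^ 2 / (σx ^ 2 * vxh) := by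
    have : σs ^ 2 * σx ^ 4 / θ₁ ^ 2 * (1 - E) / σx ^ 2 ≤ θ₂ ^ 2 / vxh / σx ^ 2 :=
      div_le_div_of_nonneg_right ht hx2.le |>.trans_eq (by ring)
    calc σs ^ 2 * σx ^ 2 / θ₁ ^ 2 * (1 - E)
        = σs ^ 2 * σx ^ 4 / θ₁ ^ 2 * (1 - E) / σx ^ 2 := by field_simp
      _ ≤ θ₂ ^ 2 / vxh / σx ^ 2 := this
      _ = θ₂ ^ 2 / (σx ^ 2 * vxh) := by rw [div_div, mul_comm]
  rw [hρ2, neg_le_neg_iff]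
  have : Real.log (1 - θ₂ ^ 2 / (σx ^ 2 * vxh))
      ≤ Real.log (1 - σs ^ 2 * σx ^ 2 / θ₁ ^ 2 * (1 - E)) :=
    Real.log_le_log hBpos (by linarith)
  linarith
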